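/- Let Σ and Σ' be maximal consistent theories of DLCA, let π be a program, and let x ∈ Nom be a nominal. If x ∈ Σ, x ∈ Σ', and Σ R^c_π Σ' (i.e., for every formula φ, [π]φ ∈ Σ implies φ ∈ Σ'), then Σ = Σ'. -/
import Mathlib


/-- The two flavours of cognitive relations: plausibility (P) and desirability (D). -/
inductive Tau : Type
  | P
  | D

mutual
/-- Formulas of the language L_DLCA. -/
inductive Form (Atm Nom Agt : Type) : Type where
  | atom : Atm → Form Atm Nom Agt
  | nom  : Nom → Form Atm Nom Agt
  | bot  : Form Atm Nom Agt
  | neg  : Form Atm Nom Agt → Form Atm Nom Agt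
  | and  : Form Atm Nom Agt → Form Atm Nom Agt → Form Atm Nom Agt
  | box  : Prog Atm Nom Agt → Form Atm Nom Agt → Form Atm Nom Agt

/-- Cognitive programs of the language L_DLCA. -/
inductive Prog (Atm Nom Agt : Type) : Type where
  | eqv   : Agt → Prog Atm Nom Agt                                  -- ≡_i
  | pre   : Agt → Tau → Prog Atm Nom Agt                            -- ⪯_{i,τ}
  | preC  : Agt → Tau → Prog Atm Nom Agt                            -- ⪯_{i,τ}^∼
  | seq   : Prog Atm Nom Agt → Prog Atm Nom Agt → Prog Atm Nom Agt  -- π ; π'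
  | union : Prog Atm Nom Agt → Prog Atm Nom Agt → Prog Atm Nom Agt  -- π ∪ π'
  | inter : Prog Atm Nom Agt → Prog Atm Nom Agt → Prog Atm Nom Agt  -- π ∩ π'
  | conv  : Prog Atm Nom Agt → Prog Atm Nom Agt                     -- −π
  | test  : Form Atm Nom Agt → Prog Atm Nom Agt                     -- φ?
end

variable {Atm Nom Agt : Type}

/-- φ → ψ := ¬(φ ∧ ¬ψ) -/
def Form.imp (φ ψ : Form Atm Nom Agt) : Form Atm Nom Agt :=
  .neg (.and φ (.neg ψ))

/-- φ ∨ ψ := ¬(¬φ ∧ ¬ψ) -/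
def Form.or (φ ψ : Form Atm Nom Agt) : Form Atm Nom Agt :=
  .neg (.and (.neg φ) (.neg ψ))

/-- φ ↔ ψ := (φ → ψ) ∧ (ψ → φ) -/
def Form.iff (φ ψ : Form Atm Nom Agt) : Form Atm Nom Agt :=
  .and (φ.imp ψ) (ψ.imp φ)

/-- ⟨π⟩φ := ¬[π]¬φ -/
def Form.dia (π : Prog Atm Nom Agt) (φ : Form Atm Nom Agt) : Form Atm Nom Agt :=
  .neg (.box π (.neg φ))

/-- φ is an instance of a classical propositional tautology: it is true under
every valuation of formulas that respects the Boolean connectives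
(treating atoms, nominals and box formulas as propositional atoms). -/
def IsTaut (φ : Form Atm Nom Agt) : Prop :=
  ∀ v : Form Atm Nom Agt → Prop,
    ¬ v .bot →
    (∀ ψ, v (.neg ψ) ↔ ¬ v ψ) →
    (∀ ψ χ, v (.and ψ χ) ↔ (v ψ ∧ v χ)) →
    v φ

/-- Theoremhood in the logic DLCA. -/
inductive Thm (Atm Nom Agt : Type) : Form Atm Nom Agt → Prop where
  | taut (φ : Form Atm Nom Agt) :
      IsTaut φ → Thm Atm Nom Agt φ
  | mp (φ ψ : Form Atm Nom Agt) :
      Thm Atm Nom Agt (φ.imp ψ) → Thm Atm Nom Agt φ → Thm Atm Nom Agt ψ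
  | nec (π : Prog Atm Nom Agt) (φ : Form Atm Nom Agt) :
      Thm Atm Nom Agt φ → Thm Atm Nom Agt (.box π φ)
  | cov (π : Prog Atm Nom Agt) :
      (∀ x : Nom, Thm Atm Nom Agt (.box π (.neg (.nom x)))) →
      Thm Atm Nom Agt (.box π .bot)
  | k (π : Prog Atm Nom Agt) (φ ψ : Form Atm Nom Agt) :
      Thm Atm Nom Agt ((Form.and (.box π φ) (.box π (φ.imp ψ))).imp (.box π ψ))
  | t_eqv (i : Agt) (φ : Form Atm Nom Agt) :
      Thm Atm Nom Agt ((Form.box (.eqv i) φ).imp φ)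
  | four_eqv (i : Agt) (φ : Form Atm Nom Agt) :
      Thm Atm Nom Agt ((Form.box (.eqv i) φ).imp (.box (.eqv i) (.box (.eqv i) φ)))
  | five_eqv (i : Agt) (φ : Form Atm Nom Agt) :
      Thm Atm Nom Agt
        ((Form.neg (.box (.eqv i) φ)).imp (.box (.eqv i) (.neg (.box (.eqv i) φ))))
  | t_pre (i : Agt) (τ : Tau) (φ : Form Atm Nom Agt) :
      Thm Atm Nom Agt ((Form.box (.pre i τ) φ).imp φ)
  | four_pre (i : Agt) (τ : Tau) (φ : Form Atm Nom Agt) :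
      Thm Atm Nom Agt
        ((Form.box (.pre i τ) φ).imp (.box (.pre i τ) (.box (.pre i τ) φ)))
  | inc (i : Agt) (τ : Tau) (φ : Form Atm Nom Agt) :
      Thm Atm Nom Agt ((Form.box (.eqv i) φ).imp (.box (.pre i τ) φ))
  | conn (i : Agt) (τ : Tau) (φ ψ : Form Atm Nom Agt) :
      Thm Atm Nom Agt
        ((Form.and (Form.dia (.eqv i) φ) (Form.dia (.eqv i) ψ)).imp
          (Form.or (Form.dia (.eqv i) (.and φ (Form.dia (.pre i τ) ψ)))
                   (Form.dia (.eqv i) (.and ψ (Form.dia (.pre i τ) φ)))))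
  | red_seq (π π' : Prog Atm Nom Agt) (φ : Form Atm Nom Agt) :
      Thm Atm Nom Agt ((Form.box (.seq π π') φ).iff (.box π (.box π' φ)))
  | red_union (π π' : Prog Atm Nom Agt) (φ : Form Atm Nom Agt) :
      Thm Atm Nom Agt
        ((Form.box (.union π π') φ).iff (.and (.box π φ) (.box π' φ)))
  | add1_inter (π π' : Prog Atm Nom Agt) (φ ψ : Form Atm Nom Agt) :
      Thm Atm Nom Agt
        ((Form.and (.box π φ) (.box π' ψ)).imp (.box (.inter π π') (.and φ ψ)))
  | add2_inter (π π' : Prog Atm Nom Agt) (x : Nom) :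
      Thm Atm Nom Agt
        ((Form.and (Form.dia π (.nom x)) (Form.dia π' (.nom x))).imp
          (Form.dia (.inter π π') (.nom x)))
  | conv1 (π : Prog Atm Nom Agt) (φ : Form Atm Nom Agt) :
      Thm Atm Nom Agt (φ.imp (.box π (Form.dia (.conv π) φ)))
  | conv2 (π : Prog Atm Nom Agt) (φ : Form Atm Nom Agt) :
      Thm Atm Nom Agt (φ.imp (.box (.conv π) (Form.dia π φ)))
  | comp1 (i : Agt) (τ : Tau) (φ : Form Atm Nom Agt) :
      Thm Atm Nom Agt
        ((Form.and (.box (.pre i τ) φ) (.box (.preC i τ) φ)).iff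
          (.box (.eqv i) φ))
  | comp2 (i : Agt) (τ : Tau) (x : Nom) :
      Thm Atm Nom Agt
        ((Form.dia (.pre i τ) (.nom x)).imp (.box (.preC i τ) (.neg (.nom x))))
  | red_test (φ ψ : Form Atm Nom Agt) :
      Thm Atm Nom Agt ((Form.box (.test φ) ψ).imp (φ.imp ψ))
  | most (π π' : Prog Atm Nom Agt) (x : Nom) (φ : Form Atm Nom Agt) :
      Thm Atm Nom Agt
        ((Form.dia π (.and (.nom x) φ)).imp (.box π' ((Form.nom x).imp φ)))

/-- A set of formulas is a theory if it contains all DLCA-theorems, is closed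
under modus ponens, and is closed under the covering rule Cov. -/
def IsTheory (S : Set (Form Atm Nom Agt)) : Prop :=
  (∀ φ, Thm Atm Nom Agt φ → φ ∈ S) ∧
  (∀ φ ψ : Form Atm Nom Agt, φ.imp ψ ∈ S → φ ∈ S → ψ ∈ S) ∧
  (∀ π : Prog Atm Nom Agt,
     (∀ x : Nom, Form.box π (.neg (.nom x)) ∈ S) → Form.box π .bot ∈ S)

/-- A theory is consistent if it does not contain ⊥. -/
def IsConsistent (S : Set (Form Atm Nom Agt)) : Prop :=
  Form.bot ∉ S

/-- A maximal consistent theory (MCT). -/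
def IsMCT (S : Set (Form Atm Nom Agt)) : Prop :=
  IsTheory S ∧ IsConsistent S ∧
  ∀ T : Set (Form Atm Nom Agt), IsTheory T → IsConsistent T → S ⊆ T → S = T

/-- The canonical relation R^c_π between sets of formulas. -/
def canR (π : Prog Atm Nom Agt) (S T : Set (Form Atm Nom Agt)) : Prop :=
  ∀ φ : Form Atm Nom Agt, Form.box π φ ∈ S → φ ∈ T

lemma taut_and_intro (φ ψ : Form Atm Nom Agt) :
    IsTaut (φ.imp (ψ.imp (.and φ ψ))) := by
  intro v hbot hneg hand
  simp only [Form.imp, hneg, hand]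
  tauto

lemma taut_top : IsTaut (Form.neg (Form.bot : Form Atm Nom Agt)) := by
  intro v hbot hneg hand
  simp only [hneg]; exact hbot

lemma theory_mp {S : Set (Form Atm Nom Agt)} (h : IsTheory S)
    {φ ψ : Form Atm Nom Agt} (h1 : φ.imp ψ ∈ S) (h2 : φ ∈ S) : ψ ∈ S :=
  h.2.1 φ ψ h1 h2

lemma theory_thm {S : Set (Form Atm Nom Agt)} (h : IsTheory S)
    {φ : Form Atm Nom Agt} (h1 : Thm Atm Nom Agt φ) : φ ∈ S :=
  h.1 φ h1

/-- if two MCTs contain the same nominal x and are related by the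
canonical relation R^c_π, then they are equal. -/
theorem canonical_nominal_unique
    [Countable Atm] [Infinite Atm] [Countable Nom] [Infinite Nom] [Finite Agt]
    (S T : Set (Form Atm Nom Agt)) (π : Prog Atm Nom Agt) (x : Nom)
    (hS : IsMCT S) (hT : IsMCT T)
    (hxS : Form.nom x ∈ S) (hxT : Form.nom x ∈ T) (hR : canR π S T) :
    S = T := by
  have hSt := hS.1
  have hTt := hT.1
  have hsub : S ⊆ T := by
    intro ψ hψ
    -- x ∧ ψ ∈ S
    have h1 : Form.and (.nom x) ψ ∈ S :=
      theory_mp hSt (theory_mp hSt (theory_thm hSt (.taut _ (taut_and_intro _ _))) hxS) hψ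
    -- conv1: (x∧ψ) → [π]⟨−π⟩(x∧ψ)
    have h2 : Form.box π (Form.dia (.conv π) (.and (.nom x) ψ)) ∈ S :=
      theory_mp hSt (theory_thm hSt (.conv1 π _)) h1
    have h3 : Form.dia (.conv π) (.and (.nom x) ψ) ∈ T := hR _ h2
    -- Most: ⟨−π⟩(x∧ψ) → [⊤?](x→ψ)
    have h4 : Form.box (.test (.neg .bot)) ((Form.nom x).imp ψ) ∈ T :=
      theory_mp hTt (theory_thm hTt (.most (.conv π) (.test (.neg .bot)) x ψ)) h3
    have h5 : (Form.neg .bot).imp ((Form.nom x).imp ψ) ∈ T :=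
      theory_mp hTt (theory_thm hTt (.red_test _ _)) h4
    have h6 : (Form.nom x).imp ψ ∈ T :=
      theory_mp hTt h5 (theory_thm hTt (.taut _ taut_top))
    exact theory_mp hTt h6 hxT
  exact hS.2.2 T hTt hT.2.1 hsub
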